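/- arXiv:0812.3222 — 3 statements merged into one kernel-verified Lean document; each statement's English description precedes it below -/
import Mathlib

section
/- Let K be an algebraically closed field of characteristic different from 2 and 3, and let ω ∈ K be a primitive third root of unity. Let G = z₀⁶ + z₁⁶ + z₂⁶ − 2(z₀³z₁³ + z₁³z₂³ + z₀³z₂³) ∈ K[z₀, z₁, z₂]. Then the set of points p ∈ K³ \ {0} at which G and all three partial derivatives ∂G/∂z₀, ∂G/∂z₁, ∂G/∂z₂ vanish simultaneously is exactly the set of nonzero scalar multiples of the nine points (ω^i, 1, 0), (ω^j, 0, 1), and (0, ω^k, 1) with i, j, k ∈ {0, 1, 2}. (Thus the plane sextic curve C : G = 0 has exactly 9 singular points.) -/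
/-! Since `∂G/∂zᵢ = 6 zᵢ² (zᵢ³ - zⱼ³ - zₖ³)` and `G = ∑ zᵢ³ (zᵢ³ - zⱼ³ - zₖ³)`, outside
characteristics 2 and 3 the singular points are the solutions of the three conditions
`zᵢ = 0 ∨ zᵢ³ = zⱼ³ + zₖ³`. If two coordinates are nonzero, subtracting their conditions gives
`2 zₖ³ = 0` for the third; so exactly one coordinate vanishes and the other two have equal cubes,
i.e. differ by a power of `ω`. -/

open MvPolynomial

/-- The sextic `G = z₀⁶ + z₁⁶ + z₂⁶ − 2(z₀³z₁³ + z₁³z₂³ + z₀³z₂³)`, with variables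
`z₀ = X 0`, `z₁ = X 1`, `z₂ = X 2`. -/
noncomputable def Gpoly (K : Type*) [CommRing K] : MvPolynomial (Fin 3) K :=
  (X 0) ^ 6 + (X 1) ^ 6 + (X 2) ^ 6
    - 2 * ((X 0) ^ 3 * (X 1) ^ 3 + (X 1) ^ 3 * (X 2) ^ 3 + (X 0) ^ 3 * (X 2) ^ 3)

section Gpoly

variable (K : Type*) [CommRing K]

lemma Gpoly_eq : Gpoly K = X 0 ^ 3 * (X 0 ^ 3 - X 1 ^ 3 - X 2 ^ 3)
    + X 1 ^ 3 * (X 1 ^ 3 - X 0 ^ 3 - X 2 ^ 3) + X 2 ^ 3 * (X 2 ^ 3 - X 0 ^ 3 - X 1 ^ 3) := by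
  rw [Gpoly]
  ring

lemma pderiv_zero_Gpoly :
    pderiv 0 (Gpoly K) = 6 * X 0 ^ 2 * (X 0 ^ 3 - X 1 ^ 3 - X 2 ^ 3) := by
  simp [Gpoly_eq]
  ring

lemma pderiv_one_Gpoly :
    pderiv 1 (Gpoly K) = 6 * X 1 ^ 2 * (X 1 ^ 3 - X 0 ^ 3 - X 2 ^ 3) := by
  simp [Gpoly_eq]
  ring

lemma pderiv_two_Gpoly :
    pderiv 2 (Gpoly K) = 6 * X 2 ^ 2 * (X 2 ^ 3 - X 0 ^ 3 - X 1 ^ 3) := by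
  simp [Gpoly_eq]
  ring

end Gpoly

lemma eval_Gpoly_singular_iff {K : Type*} [CommRing K] [NoZeroDivisors K] (h6 : (6 : K) ≠ 0)
    (x y z : K) :
    (eval ![x, y, z] (Gpoly K) = 0 ∧ ∀ i : Fin 3, eval ![x, y, z] (pderiv i (Gpoly K)) = 0) ↔
      (x = 0 ∨ x ^ 3 = y ^ 3 + z ^ 3) ∧ (y = 0 ∨ y ^ 3 = x ^ 3 + z ^ 3) ∧
        (z = 0 ∨ z ^ 3 = x ^ 3 + y ^ 3) := by
  have factor (a b c : K) :
      6 * a ^ 2 * (a ^ 3 - b ^ 3 - c ^ 3) = 0 ↔ a = 0 ∨ a ^ 3 = b ^ 3 + c ^ 3 := by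
    simp [h6, sub_sub, sub_eq_zero]
  have term_eq_zero (a b c : K) (h : a = 0 ∨ a ^ 3 = b ^ 3 + c ^ 3) :
      a ^ 3 * (a ^ 3 - b ^ 3 - c ^ 3) = 0 := by
    rcases h with rfl | h
    · ring
    · rw [h]; ring
  simp only [Fin.forall_fin_succ, Fin.succ_zero_eq_one, Fin.succ_one_eq_two, IsEmpty.forall_iff,
    and_true, pderiv_zero_Gpoly, pderiv_one_Gpoly, pderiv_two_Gpoly]
  simp only [Gpoly_eq, map_add, map_sub, map_mul, map_pow, map_ofNat, eval_X,
    Matrix.cons_val_zero, Matrix.cons_val_one, Matrix.cons_val_two, Matrix.head_cons,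
    Matrix.tail_cons, factor]
  refine and_iff_right_of_imp fun ⟨hx, hy, hz⟩ => ?_
  linear_combination term_eq_zero _ _ _ hx + term_eq_zero _ _ _ hy + term_eq_zero _ _ _ hz

lemma cube_system_iff_cube_cases {K : Type*} [CommRing K] [NoZeroDivisors K] (h2 : (2 : K) ≠ 0)
    (x y z : K) :
    (x = 0 ∨ x ^ 3 = y ^ 3 + z ^ 3) ∧ (y = 0 ∨ y ^ 3 = x ^ 3 + z ^ 3) ∧
        (z = 0 ∨ z ^ 3 = x ^ 3 + y ^ 3) ↔
      (x = 0 ∧ y ^ 3 = z ^ 3) ∨ (y = 0 ∧ x ^ 3 = z ^ 3) ∨ (z = 0 ∧ x ^ 3 = y ^ 3) := by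
  constructor
  · rintro ⟨rfl | hx, rfl | hy, hz⟩
    · refine Or.inl ⟨rfl, ?_⟩
      rcases hz with rfl | hz
      · rfl
      · linear_combination -hz
    · exact Or.inl ⟨rfl, by linear_combination hy⟩
    · exact Or.inr (Or.inl ⟨rfl, by linear_combination hx⟩)
    · have hz : z = 0 := by
        refine pow_eq_zero_iff (n := 3) (by norm_num) |>.1 ?_
        refine (mul_eq_zero.1 (?_ : 2 * z ^ 3 = 0)).resolve_left h2
        linear_combination - hx - hy
      subst hz
      exact Or.inr (Or.inr ⟨rfl, by linear_combination hx⟩)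
  · rintro (⟨rfl, h⟩ | ⟨rfl, h⟩ | ⟨rfl, h⟩) <;> simp [h]

lemma IsPrimitiveRoot.pow_three_eq_pow_three_iff {K : Type*} [Field K] {ω : K}
    (hω : IsPrimitiveRoot ω 3) (a b : K) :
    a ^ 3 = b ^ 3 ↔ ∃ n : Fin 3, a = b * ω ^ (n : ℕ) := by
  constructor
  · intro h
    by_cases hb : b = 0
    · subst hb
      exact ⟨0, by simpa using h⟩
    obtain ⟨i, hi, hωi⟩ := hω.eq_pow_of_pow_eq_one (ξ := a / b)
      (by rw [div_pow, h, div_self (pow_ne_zero 3 hb)])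
    exact ⟨⟨i, hi⟩, by rw [Fin.val_mk, hωi, mul_div_cancel₀ _ hb]⟩
  · rintro ⟨n, rfl⟩
    rw [mul_pow, ← pow_mul, mul_comm _ 3, pow_mul, hω.pow_eq_one, one_pow, mul_one]

lemma cube_cases_iff_exists_smul_cusp {K : Type*} [Field K] {ω : K} (hω : IsPrimitiveRoot ω 3) {x y z : K}
    (hxyz : ![x, y, z] ≠ 0) :
    ((x = 0 ∧ y ^ 3 = z ^ 3) ∨ (y = 0 ∧ x ^ 3 = z ^ 3) ∨ (z = 0 ∧ x ^ 3 = y ^ 3)) ↔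
      ∃ lam : K, lam ≠ 0 ∧ ∃ n : Fin 3,
        ![x, y, z] = lam • ![ω ^ (n : ℕ), 1, 0] ∨
        ![x, y, z] = lam • ![ω ^ (n : ℕ), 0, 1] ∨
        ![x, y, z] = lam • ![0, ω ^ (n : ℕ), 1] := by
  simp only [hω.pow_three_eq_pow_three_iff, Matrix.smul_cons, Matrix.smul_empty, smul_eq_mul,
    Matrix.vecCons_inj, mul_one, mul_zero, and_true]
  constructor
  · rintro (⟨rfl, n, rfl⟩ | ⟨rfl, n, rfl⟩ | ⟨rfl, n, rfl⟩)
    · exact ⟨z, fun hz => hxyz (by simp [hz]), n, Or.inr (Or.inr ⟨rfl, rfl, rfl⟩)⟩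
    · exact ⟨z, fun hz => hxyz (by simp [hz]), n, Or.inr (Or.inl ⟨rfl, rfl, rfl⟩)⟩
    · exact ⟨y, fun hy => hxyz (by simp [hy]), n, Or.inl ⟨rfl, rfl, rfl⟩⟩
  · rintro ⟨lam, -, n, ⟨rfl, rfl, rfl⟩ | ⟨rfl, rfl, rfl⟩ | ⟨rfl, rfl, rfl⟩⟩
    · exact Or.inr (Or.inr ⟨rfl, n, rfl⟩)
    · exact Or.inr (Or.inl ⟨rfl, n, rfl⟩)
    · exact Or.inl ⟨rfl, n, rfl⟩

theorem singular_locus_of_sextic_general (K : Type*) [Field K]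
    (h2 : (2 : K) ≠ 0) (h3 : (3 : K) ≠ 0) (ω : K) (hω : IsPrimitiveRoot ω 3)
    (p : Fin 3 → K) (hp : p ≠ 0) :
    (eval p (Gpoly K) = 0 ∧ ∀ i : Fin 3, eval p (pderiv i (Gpoly K)) = 0) ↔
      ∃ lam : K, lam ≠ 0 ∧ ∃ n : Fin 3,
        p = lam • ![ω ^ (n : ℕ), 1, 0] ∨
        p = lam • ![ω ^ (n : ℕ), 0, 1] ∨
        p = lam • ![0, ω ^ (n : ℕ), 1] := by
  have h6 : (6 : K) ≠ 0 := by
    rw [show (6 : K) = 2 * 3 by norm_num]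
    exact mul_ne_zero h2 h3
  obtain ⟨x, y, z, rfl⟩ : ∃ x y z : K, p = ![x, y, z] :=
    ⟨p 0, p 1, p 2, by ext i; fin_cases i <;> rfl⟩
  rw [eval_Gpoly_singular_iff h6, cube_system_iff_cube_cases h2,
    cube_cases_iff_exists_smul_cusp hω hp]

/-- Over an algebraically closed field `K` of characteristic `≠ 2, 3` containing a
primitive third root of unity `ω`, the common vanishing locus in `K³ \ {0}` of `G` and its
three partial derivatives consists exactly of the nonzero scalar multiples of the nine
points `(ωⁱ, 1, 0)`, `(ωʲ, 0, 1)` and `(0, ωᵏ, 1)` with `i, j, k ∈ {0, 1, 2}`: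
the plane sextic `C : G = 0` has exactly nine singular points (its nine cusps). -/
theorem singular_locus_of_sextic (K : Type*) [Field K] [IsAlgClosed K]
    (h2 : (2 : K) ≠ 0) (h3 : (3 : K) ≠ 0) (ω : K) (hω : IsPrimitiveRoot ω 3)
    (p : Fin 3 → K) (hp : p ≠ 0) :
    (eval p (Gpoly K) = 0 ∧ ∀ i : Fin 3, eval p (pderiv i (Gpoly K)) = 0) ↔
      ∃ lam : K, lam ≠ 0 ∧ ∃ n : Fin 3,
        p = lam • ![ω ^ (n : ℕ), 1, 0] ∨
        p = lam • ![ω ^ (n : ℕ), 0, 1] ∨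
        p = lam • ![0, ω ^ (n : ℕ), 1] :=
  singular_locus_of_sextic_general K h2 h3 ω hω p hp
end

section
/- Let F be a finite field with q elements such that 3 divides q − 1. Then the number of quadruples (x, y, s, t) ∈ F⁴ satisfying t·y + x³ − s³ = 0 is exactly q³ + 2q² − 2q. -/
/-!
For fixed `s, x`, the equation `t * y = c` with `c = s³ - x³` has `q - 1` solutions if `c ≠ 0`
and `2q - 1` if `c = 0`. Since `3 ∣ q - 1`, the field contains a primitive cube root of unity,
so every nonzero cube has exactly three cube roots and `s³ = x³` has `3(q - 1) + 1` solutions.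
Hence the count is `q²(q - 1) + q(3q - 2) = q³ + 2q² - 2q`.
-/

open Finset Polynomial

theorem FiniteField.exists_isPrimitiveRoot_of_dvd {F : Type*} [Field F] [Fintype F] {n : ℕ}
    (hn : n ∣ Fintype.card F - 1) : ∃ ζ : F, IsPrimitiveRoot ζ n := by
  classical
  obtain ⟨g, hg⟩ := IsCyclic.exists_ofOrder_eq_natCard (α := Fˣ)
  rw [Nat.card_eq_fintype_card, Fintype.card_units] at hg
  refine ⟨(g ^ (orderOf g / n) : Fˣ), IsPrimitiveRoot.coe_units_iff.2 ?_⟩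
  exact IsPrimitiveRoot.iff_orderOf.2 (orderOf_pow_orderOf_div (orderOf_pos g).ne' (hg ▸ hn))

section PowEqPow

variable {R : Type*} [CommRing R] [IsDomain R] [Fintype R] [DecidableEq R]

theorem IsPrimitiveRoot.card_filter_pow_eq_pow {ζ : R} {n : ℕ} (hζ : IsPrimitiveRoot ζ n)
    (hn : 0 < n) {x : R} (hx : x ≠ 0) : #{s : R | s ^ n = x ^ n} = n := by
  have hroots : ({s : R | s ^ n = x ^ n} : Finset R) = nthRootsFinset n (x ^ n) := by
    ext s
    simp [Polynomial.mem_nthRootsFinset hn]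
  rw [hroots, nthRootsFinset_def,
    Multiset.toFinset_card_of_nodup (hζ.nthRoots_nodup (pow_ne_zero n hx)), hζ.card_nthRoots,
    if_pos ⟨x, rfl⟩]

theorem IsPrimitiveRoot.card_filter_pow_eq_pow_prod {ζ : R} {n : ℕ} (hζ : IsPrimitiveRoot ζ n)
    (hn : 0 < n) : #{p : R × R | p.1 ^ n = p.2 ^ n} = n * (Fintype.card R - 1) + 1 := by
  have hzero : #{s : R | s ^ n = (0 : R) ^ n} = 1 := by
    simp [zero_pow hn.ne', pow_eq_zero_iff hn.ne', filter_eq']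
  calc #{p : R × R | p.1 ^ n = p.2 ^ n}
      = ∑ x : R, #{s : R | s ^ n = x ^ n} := by
        simp only [card_filter, Fintype.sum_prod_type_right]
    _ = #{s : R | s ^ n = (0 : R) ^ n} + ∑ x ∈ {0}ᶜ, #{s : R | s ^ n = x ^ n} :=
        Fintype.sum_eq_add_sum_compl 0 _
    _ = n * (Fintype.card R - 1) + 1 := by
        rw [hzero, sum_congr rfl fun x hx => hζ.card_filter_pow_eq_pow hn (by simpa using hx)]
        simp [card_compl, add_comm, mul_comm]

end PowEqPow

section MulEq

variable {F : Type*} [Field F] [Fintype F] [DecidableEq F]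

theorem card_filter_mul_eq (c : F) :
    #{p : F × F | p.1 * p.2 = c} = Fintype.card F - 1 + if c = 0 then Fintype.card F else 0 := by
  have hunit (a : F) (ha : a ≠ 0) : #{b : F | a * b = c} = 1 := by
    simp [← eq_inv_mul_iff_mul_eq₀ ha, filter_eq']
  calc #{p : F × F | p.1 * p.2 = c}
      = ∑ a : F, #{b : F | a * b = c} := by
        simp only [card_filter, Fintype.sum_prod_type]
    _ = #{b : F | 0 * b = c} + ∑ a ∈ {0}ᶜ, #{b : F | a * b = c} :=
        Fintype.sum_eq_add_sum_compl 0 _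
    _ = Fintype.card F - 1 + if c = 0 then Fintype.card F else 0 := by
        rw [sum_congr rfl fun a ha => hunit a (by simpa using ha)]
        by_cases hc : c = 0 <;> simp [hc, eq_comm, card_compl, add_comm]

theorem card_filter_mul_eq_apply {α : Type*} [Fintype α] [DecidableEq α] (f : α → F) :
    #{x : α × F × F | x.2.1 * x.2.2 = f x.1} =
      Fintype.card α * (Fintype.card F - 1) + Fintype.card F * #{a | f a = 0} := by
  calc #{x : α × F × F | x.2.1 * x.2.2 = f x.1}
      = ∑ a : α, #{p : F × F | p.1 * p.2 = f a} := by
        simp only [card_filter, Fintype.sum_prod_type]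
    _ = _ := by
        simp only [card_filter_mul_eq, sum_add_distrib, ← sum_filter, sum_const, smul_eq_mul,
          card_univ, mul_comm]

end MulEq

def coneCoordEquiv (F : Type*) [Field F] :
    {v : Fin 4 → F // v 3 * v 1 + v 0 ^ 3 - v 2 ^ 3 = 0} ≃
      {x : (F × F) × F × F // x.2.1 * x.2.2 = x.1.1 ^ 3 - x.1.2 ^ 3} :=
  Equiv.subtypeEquiv
    { toFun := fun v => ((v 2, v 0), (v 3, v 1))
      invFun := fun x => ![x.1.2, x.2.2, x.1.1, x.2.1]
      left_inv := fun v => by ext i; fin_cases i <;> rfl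
      right_inv := fun _ => rfl }
    fun _ => sub_eq_zero.trans eq_sub_iff_add_eq.symm

/-- If `F` is a finite field with `q` elements and `3 ∣ q − 1`, then the number of
quadruples `(x, y, s, t) ∈ F⁴` with `t·y + x³ − s³ = 0` is exactly `q³ + 2q² − 2q`.
Here `x = v 0`, `y = v 1`, `s = v 2`, `t = v 3`. -/
theorem card_affine_cone_surface (F : Type*) [Field F] [Fintype F]
    (h : 3 ∣ Fintype.card F - 1) :
    Nat.card {v : Fin 4 → F // v 3 * v 1 + v 0 ^ 3 - v 2 ^ 3 = 0} =
      Fintype.card F ^ 3 + 2 * Fintype.card F ^ 2 - 2 * Fintype.card F := by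
  classical
  obtain ⟨ζ, hζ⟩ := FiniteField.exists_isPrimitiveRoot_of_dvd h
  rw [Nat.card_congr (coneCoordEquiv F), Nat.card_eq_fintype_card, Fintype.card_subtype,
    card_filter_mul_eq_apply fun p : F × F => p.1 ^ 3 - p.2 ^ 3]
  simp only [sub_eq_zero, Fintype.card_prod, hζ.card_filter_pow_eq_pow_prod three_pos]
  obtain ⟨k, hk⟩ := Nat.exists_eq_add_one_of_ne_zero (Fintype.card_ne_zero (α := F))
  rw [hk, Nat.add_sub_cancel]
  exact Nat.eq_sub_of_add_eq (by ring)
end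

section
/- Let F be a finite field with q elements of characteristic different from 2, such that 3 divides q − 1, and let ω ∈ F satisfy ω³ = 1, ω ≠ 1. Then the number of quadruples (x, y, s, t) ∈ F⁴ satisfying y² = x³ − 64s³ + 144ω t² is exactly q³ + 2q² − 2q. (This corresponds to the surface S ⊂ P(2,3,2,3) having q² + 3q + 1 points over F, so that Frobenius acts as multiplication by q on H²(S).) -/
/-!
Since `ω⁴ = ω`, the term `144 ω t²` is the square `(12 ω² t)²`, so the equation reads
`(y - 12ω²t)(y + 12ω²t) = x³ - 64 s³`. For fixed `(x, s)` the hyperbola `u w = c` has `q - 1`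
points when `c ≠ 0` and `2q - 1` when `c = 0`; and `x³ = (4s)³` has exactly `3q - 2` solutions,
because `1, ω, ω²` are three distinct cube roots of unity. Hence the count is
`q² (q - 1) + q (3q - 2) = q³ + 2q² - 2q`.
-/

open Finset

theorem Nat.card_subtype_prod_eq_sum {α β : Type*} [Fintype α] [Finite β] (P : α → β → Prop) :
    Nat.card {p : α × β // P p.1 p.2} = ∑ a, Nat.card {b // P a b} := by
  rw [Nat.card_congr (Equiv.subtypeProdEquivSigmaSubtype P), Nat.card_sigma]

theorem Fintype.sum_ite_eq_add {α : Type*} [Fintype α] [DecidableEq α] (a : α) (A B : ℕ) :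
    ∑ x, (if x = a then A else B) = A + (Fintype.card α - 1) * B := by
  simp [sum_ite, filter_eq', filter_ne', card_erase_of_mem]

theorem Fintype.sum_ite_eq_mul_card {α : Type*} [Fintype α] (P : α → Prop) [DecidablePred P]
    (A : ℕ) : ∑ x, (if P x then A else 0) = A * Nat.card {x // P x} := by
  rw [sum_ite, sum_const_zero, add_zero, sum_const, smul_eq_mul, mul_comm,
    Nat.card_eq_fintype_card, Fintype.card_subtype]

theorem IsPrimitiveRoot.card_pow_eq_pow {R : Type*} [CommRing R] [IsDomain R] [DecidableEq R]
    {ζ : R} {n : ℕ} (hζ : IsPrimitiveRoot ζ n) (hn : 0 < n) (a : R) :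
    Nat.card {x : R // x ^ n = a ^ n} = if a = 0 then 1 else n := by
  split_ifs with ha
  · simp [ha, zero_pow hn.ne', pow_eq_zero_iff hn.ne']
  · rw [Nat.card_congr (Equiv.subtypeEquivRight fun x =>
        (Polynomial.mem_nthRootsFinset hn (a ^ n)).symm),
      Nat.card_eq_finsetCard, Polynomial.nthRootsFinset_def,
      Multiset.toFinset_card_of_nodup (hζ.nthRoots_nodup (pow_ne_zero n ha)),
      hζ.nthRoots_eq rfl, Multiset.card_map, Multiset.card_range]

section Field

variable {F : Type*} [Field F]

theorem IsPrimitiveRoot.card_pow_eq_mul_pow [Fintype F] [DecidableEq F]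
    {ζ : F} {n : ℕ} (hζ : IsPrimitiveRoot ζ n) (hn : 0 < n) {b : F} (hb : b ≠ 0) :
    Nat.card {p : F × F // p.2 ^ n = (b * p.1) ^ n} = 1 + (Fintype.card F - 1) * n := by
  rw [Nat.card_subtype_prod_eq_sum (fun s x : F => x ^ n = (b * s) ^ n),
    sum_congr rfl fun s _ => hζ.card_pow_eq_pow hn (b * s)]
  simp only [mul_eq_zero, hb, false_or]
  exact Fintype.sum_ite_eq_add 0 1 n

theorem card_cube_sub_sixtyFour_mul_cube_eq_zero [Fintype F] {ω : F}
    (hω : IsPrimitiveRoot ω 3) (h2 : (2 : F) ≠ 0) :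
    Nat.card {p : F × F // p.2 ^ 3 - 64 * p.1 ^ 3 = 0} = 1 + (Fintype.card F - 1) * 3 := by
  classical
  have h4 : (4 : F) ≠ 0 := by simpa [show (4 : F) = 2 * 2 by norm_num] using h2
  rw [← hω.card_pow_eq_mul_pow (by norm_num) h4]
  exact Nat.card_congr <| Equiv.subtypeEquivRight fun p => by
    rw [sub_eq_zero, mul_pow]; norm_num

def sqSubSqEquiv {a : F} (h2 : (2 : F) ≠ 0) (ha : a ≠ 0) : F × F ≃ F × F where
  toFun p := (p.1 - a * p.2, p.1 + a * p.2)
  invFun p := ((p.1 + p.2) / 2, (p.2 - p.1) / (2 * a))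
  left_inv p := by ext <;> field_simp <;> ring
  right_inv p := by ext <;> field_simp <;> ring

theorem card_solutions_sq_sub_sq_eq {a : F} (h2 : (2 : F) ≠ 0) (ha : a ≠ 0) (c : F) :
    Nat.card {p : F × F // p.1 ^ 2 - a ^ 2 * p.2 ^ 2 = c} =
      Nat.card {p : F × F // p.1 * p.2 = c} :=
  Nat.card_congr <| (sqSubSqEquiv h2 ha).subtypeEquiv fun p => by
    simp only [sqSubSqEquiv, Equiv.coe_fn_mk]; ring_nf

theorem card_solutions_mul_eq [Fintype F] [DecidableEq F] (c : F) :
    Nat.card {p : F × F // p.1 * p.2 = c} =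
      (if c = 0 then Fintype.card F else 0) + (Fintype.card F - 1) := by
  have fiber (x : F) : Nat.card {y : F // x * y = c} =
      if x = 0 then (if c = 0 then Fintype.card F else 0) else 1 := by
    split_ifs with hx hc
    · simp [hx, hc]
    · simp [hx, Ne.symm hc]
    · rw [Nat.card_congr (Equiv.subtypeEquivRight fun y => by rw [eq_div_iff hx, mul_comm] :
        {y : F // x * y = c} ≃ {y // y = c / x}), Nat.card_unique]
  rw [Nat.card_subtype_prod_eq_sum (fun x y : F => x * y = c), sum_congr rfl fun x _ => fiber x,
    Fintype.sum_ite_eq_add, mul_one]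

theorem card_sq_sub_sq_eq_family {α : Type*} [Fintype α] [Fintype F] {a : F}
    (h2 : (2 : F) ≠ 0) (ha : a ≠ 0) (f : α → F) :
    Nat.card {p : α × (F × F) // p.2.1 ^ 2 - a ^ 2 * p.2.2 ^ 2 = f p.1} =
      Fintype.card F * Nat.card {z // f z = 0} +
        Fintype.card α * (Fintype.card F - 1) := by
  classical
  rw [Nat.card_subtype_prod_eq_sum (fun z (yt : F × F) => yt.1 ^ 2 - a ^ 2 * yt.2 ^ 2 = f z)]
  simp only [card_solutions_sq_sub_sq_eq h2 ha, card_solutions_mul_eq]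
  rw [sum_add_distrib, Fintype.sum_ite_eq_mul_card, sum_const, card_univ, smul_eq_mul]

end Field

@[simps]
def finFourEquivProdProd (α : Type*) : (Fin 4 → α) ≃ (α × α) × (α × α) where
  toFun v := ((v 2, v 0), (v 1, v 3))
  invFun p := ![p.1.2, p.2.1, p.1.1, p.2.2]
  left_inv v := by ext i; fin_cases i <;> rfl
  right_inv p := rfl

theorem card_local_surface_general (F : Type*) [Field F] [Fintype F]
    (h2 : (2 : F) ≠ 0)
    (ω : F) (hω3 : ω ^ 3 = 1) (hω1 : ω ≠ 1) :
    Nat.card {v : Fin 4 → F // v 1 ^ 2 = v 0 ^ 3 - 64 * v 2 ^ 3 + 144 * ω * v 3 ^ 2} =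
      Fintype.card F ^ 3 + 2 * Fintype.card F ^ 2 - 2 * Fintype.card F := by
  have hω : IsPrimitiveRoot ω 3 := IsPrimitiveRoot.iff_orderOf.mpr (orderOf_eq_prime hω3 hω1)
  have h12 : 12 * ω ^ 2 ≠ 0 := by
    refine mul_ne_zero ?_ (pow_ne_zero 2 (hω.ne_zero (by norm_num)))
    have h3 : (3 : F) ≠ 0 := by simpa using hω.neZero'.out
    simpa [show (12 : F) = 2 * 2 * 3 by norm_num] using ⟨h2, h3⟩
  have hω4 : ω ^ 4 = ω := by rw [pow_succ, hω3, one_mul]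
  have hfactor : Nat.card {v : Fin 4 → F // v 1 ^ 2 = v 0 ^ 3 - 64 * v 2 ^ 3 + 144 * ω * v 3 ^ 2} =
      Nat.card {p : (F × F) × (F × F) //
        p.2.1 ^ 2 - (12 * ω ^ 2) ^ 2 * p.2.2 ^ 2 = p.1.2 ^ 3 - 64 * p.1.1 ^ 3} :=
    Nat.card_congr <| (finFourEquivProdProd F).subtypeEquiv fun v => by
      simp only [finFourEquivProdProd_apply]
      constructor <;> intro h
      · linear_combination h - 144 * v 3 ^ 2 * hω4
      · linear_combination h + 144 * v 3 ^ 2 * hω4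
  rw [hfactor, card_sq_sub_sq_eq_family h2 h12 fun z : F × F => z.2 ^ 3 - 64 * z.1 ^ 3,
    card_cube_sub_sixtyFour_mul_cube_eq_zero hω h2, Fintype.card_prod]
  obtain ⟨r, hr⟩ := Nat.exists_eq_add_one_of_ne_zero (Fintype.card_ne_zero (α := F))
  rw [hr, Nat.add_sub_cancel]
  refine (Nat.sub_eq_of_eq_add ?_).symm
  ring

/-- If `F` is a finite field with `q` elements, of characteristic `≠ 2`, with `3 ∣ q − 1`,
and `ω ∈ F` is a primitive third root of unity, then the number of quadruples
`(x, y, s, t) ∈ F⁴` with `y² = x³ − 64s³ + 144ω t²` is exactly `q³ + 2q² − 2q`.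
(This corresponds to the surface `S ⊂ P(2,3,2,3)` having `q² + 3q + 1` points over `F`,
so that Frobenius acts as multiplication by `q` on `H²(S)`.)
Here `x = v 0`, `y = v 1`, `s = v 2`, `t = v 3`. -/
theorem card_local_surface (F : Type*) [Field F] [Fintype F]
    (h2 : (2 : F) ≠ 0) (h : 3 ∣ Fintype.card F - 1)
    (ω : F) (hω3 : ω ^ 3 = 1) (hω1 : ω ≠ 1) :
    Nat.card {v : Fin 4 → F // v 1 ^ 2 = v 0 ^ 3 - 64 * v 2 ^ 3 + 144 * ω * v 3 ^ 2} =
      Fintype.card F ^ 3 + 2 * Fintype.card F ^ 2 - 2 * Fintype.card F :=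
  card_local_surface_general F h2 ω hω3 hω1
end
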